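/- arXiv:2109.13809 — 4 statements merged into one kernel-verified Lean document; each statement's English description precedes it below -/
import Mathlib

section
/- There is no bijective holomorphic map from the tube domain T = {(z₁,z₂) ∈ ℂ² : Re z₂ < 0} onto the open unit ball B = {(ζ₁,ζ₂) ∈ ℂ² : |ζ₁|² + |ζ₂|² < 1}. (In particular the Siegel-Jacobi space 𝕄_Normal and the Siegel half-space 𝕎_Normal are not biholomorphic.) -/
open Complex Bornology Set

/-!
Every horizontal line `z ↦ (z, -1)` lies in the tube `Re z₂ < 0`, so a holomorphic map from the tube
into the ball restricts to a bounded entire map on that line. By Liouville it is constant there,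
hence not injective.
-/

section Liouville

variable {E F : Type*} [NormedAddCommGroup E] [NormedSpace ℂ E]
  [NormedAddCommGroup F] [NormedSpace ℂ F]

theorem DifferentiableOn.apply_eq_apply_on_line_of_isBounded {f : E → F} {U : Set E}
    (hU : IsOpen U) (hf : DifferentiableOn ℂ f U) (hb : IsBounded (f '' U)) {a v : E}
    (hline : ∀ z : ℂ, a + z • v ∈ U) (z w : ℂ) : f (a + z • v) = f (a + w • v) := by
  have hdiff : Differentiable ℂ fun t : ℂ ↦ f (a + t • v) := fun t ↦
    ((hf _ (hline t)).differentiableAt (hU.mem_nhds (hline t))).comp t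
      ((differentiable_id.smul_const v).const_add a t)
  refine hdiff.apply_eq_apply_of_bounded (hb.subset ?_) z w
  rintro _ ⟨t, rfl⟩
  exact mem_image_of_mem f (hline t)

theorem DifferentiableOn.not_injOn_of_isBounded_of_line_subset {f : E → F} {U : Set E}
    (hU : IsOpen U) (hf : DifferentiableOn ℂ f U) (hb : IsBounded (f '' U)) {a v : E}
    (hv : v ≠ 0) (hline : ∀ z : ℂ, a + z • v ∈ U) : ¬ InjOn f U := by
  intro hinj
  have h := hinj (hline 0) (hline 1) (hf.apply_eq_apply_on_line_of_isBounded hU hb hline 0 1)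
  simp only [zero_smul, add_zero, one_smul, left_eq_add] at h
  exact hv h

end Liouville

theorem isOpen_setOf_snd_re_neg : IsOpen {z : ℂ × ℂ | z.2.re < 0} :=
  isOpen_lt (continuous_re.comp continuous_snd) continuous_const

theorem isBounded_setOf_norm_sq_add_norm_sq_lt_one :
    IsBounded {ζ : ℂ × ℂ | ‖ζ.1‖ ^ 2 + ‖ζ.2‖ ^ 2 < 1} := by
  refine (Metric.isBounded_closedBall (x := (0 : ℂ × ℂ)) (r := 1)).subset fun ζ (hζ : ‖ζ.1‖ ^ 2 + ‖ζ.2‖ ^ 2 < 1) ↦ ?_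
  have h₁ : ‖ζ.1‖ ≤ 1 := by nlinarith [norm_nonneg ζ.1, sq_nonneg ‖ζ.2‖]
  have h₂ : ‖ζ.2‖ ≤ 1 := by nlinarith [norm_nonneg ζ.2, sq_nonneg ‖ζ.1‖]
  simpa only [mem_closedBall_zero_iff, Prod.norm_def] using max_le h₁ h₂

/-- There is no bijective holomorphic map from the tube domain
`T = {(z₁,z₂) : Re z₂ < 0}` onto the unit ball in `ℂ²`; in particular the
Siegel-Jacobi space and the Siegel half-space are not biholomorphic. -/
theorem no_biholomorphism_tube_to_ball :
    ¬ ∃ f : ℂ × ℂ → ℂ × ℂ,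
      DifferentiableOn ℂ f {z : ℂ × ℂ | z.2.re < 0} ∧
      Set.BijOn f {z : ℂ × ℂ | z.2.re < 0}
        {ζ : ℂ × ℂ | ‖ζ.1‖ ^ 2 + ‖ζ.2‖ ^ 2 < 1} := by
  rintro ⟨f, hf, hbij⟩
  have hb : IsBounded (f '' {z : ℂ × ℂ | z.2.re < 0}) :=
    hbij.image_eq ▸ isBounded_setOf_norm_sq_add_norm_sq_lt_one
  exact hf.not_injOn_of_isBounded_of_line_subset isOpen_setOf_snd_re_neg hb
    (a := (0, -1)) (v := (1, 0)) (by simp) (fun z ↦ by simp) hbij.injOn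
end

section
/- Let Φ(x¹,x²) = −(x¹)²/(4x²) − (1/2)log(−x²) on Ω = {(x¹,x²) ∈ ℝ² : x² < 0}, and let g(x) = Hess Φ(x) denote its Hessian matrix. Then at every point of Ω: (i) det g = −1/(4(x²)³); (ii) the Hessian matrix of the function log det g equals [[0,0],[0, 3/(x²)²]]; and (iii) tr( g⁻¹ · Hess(log det g) ) = 6. (Consequently the Kähler metric on the Siegel-Jacobi space 𝕄_Normal has constant scalar curvature −6 and Ricci form proportional to diag(0, 3/(x²)²).) -/
open Real Matrix

/-- Partial derivative of `f : ℝⁿ → ℝ` in the `i`-th coordinate direction. -/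
noncomputable def pd {n : ℕ} (i : Fin n) (f : (Fin n → ℝ) → ℝ) : (Fin n → ℝ) → ℝ :=
  fun x => fderiv ℝ f x (Pi.single i 1)

/-- Hessian matrix of second partial derivatives of `f : ℝⁿ → ℝ`. -/
noncomputable def hessian {n : ℕ} (f : (Fin n → ℝ) → ℝ) (x : Fin n → ℝ) :
    Matrix (Fin n) (Fin n) ℝ :=
  Matrix.of fun i j => pd i (pd j f) x

/-- The log-partition function of the normal family (up to an additive constant). -/
noncomputable def ΦN (x : Fin 2 → ℝ) : ℝ :=
  -(x 0) ^ 2 / (4 * x 1) - (1 / 2) * Real.log (-(x 1))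

/-! The potential splits as `Φ(x) = p(x¹) q(x²) + r(x²)` with `p(s) = -s²/4`, `q(t) = t⁻¹`,
`r(t) = -½ log t` (`Real.log` is even), and for such functions the Hessian is read off from
one-variable derivatives: `[[p'' q, p' q'], [p' q', p q'' + r'']]`. This gives
`det g = -1/(4(x²)³)`, so `log det g` is again of that shape with `p = q = 0` and
`r(t) = -3 log t - log 4`, whence its Hessian `diag(0, 3/(x²)²)`.
Only the `(2,2)` entry of `g⁻¹`, namely `g₁₁ / det g = 2(x²)²`, meets it in the trace. -/

open Filter Topology ContinuousLinearMap

theorem pd_eq_of_hasFDerivAt {n : ℕ} {f : (Fin n → ℝ) → ℝ} {L : (Fin n → ℝ) →L[ℝ] ℝ}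
    {y : Fin n → ℝ} (h : HasFDerivAt f L y) (i : Fin n) : pd i f y = L (Pi.single i 1) := by
  rw [pd, h.fderiv]

theorem pd_congr_of_eventuallyEq {n : ℕ} {f g : (Fin n → ℝ) → ℝ} {y : Fin n → ℝ}
    (h : f =ᶠ[𝓝 y] g) (i : Fin n) : pd i f y = pd i g y := by
  rw [pd, pd, h.fderiv_eq]

theorem hessian_fin_two (f : (Fin 2 → ℝ) → ℝ) (y : Fin 2 → ℝ) :
    hessian f y = !![pd 0 (pd 0 f) y, pd 0 (pd 1 f) y; pd 1 (pd 0 f) y, pd 1 (pd 1 f) y] :=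
  Matrix.etaExpand_eq _ |>.symm

theorem pd_eq_of_hasFDerivAt_fin_two {f : (Fin 2 → ℝ) → ℝ} {a b : ℝ} {y : Fin 2 → ℝ}
    (h : HasFDerivAt f (a • proj 0 + b • proj 1 : (Fin 2 → ℝ) →L[ℝ] ℝ) y) :
    pd 0 f y = a ∧ pd 1 f y = b := by
  simp [pd_eq_of_hasFDerivAt h]

theorem HasDerivAt.hasFDerivAt_comp_apply {n : ℕ} {g : ℝ → ℝ} {g' : ℝ} {y : Fin n → ℝ}
    {i : Fin n} (h : HasDerivAt g g' (y i)) :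
    HasFDerivAt (fun z : Fin n → ℝ => g (z i)) (g' • proj i : (Fin n → ℝ) →L[ℝ] ℝ) y :=
  h.comp_hasFDerivAt y (hasFDerivAt_apply i y)

theorem hasFDerivAt_mul_add_fin_two {p q r : ℝ → ℝ} {p' q' r' : ℝ} {y : Fin 2 → ℝ}
    (hp : HasDerivAt p p' (y 0)) (hq : HasDerivAt q q' (y 1)) (hr : HasDerivAt r r' (y 1)) :
    HasFDerivAt (fun z : Fin 2 → ℝ => p (z 0) * q (z 1) + r (z 1))
      ((p' * q (y 1)) • proj 0 + (p (y 0) * q' + r') • proj 1 : (Fin 2 → ℝ) →L[ℝ] ℝ) y := by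
  refine ((hp.hasFDerivAt_comp_apply.fun_mul hq.hasFDerivAt_comp_apply).fun_add
    hr.hasFDerivAt_comp_apply).congr_fderiv (ContinuousLinearMap.ext fun v => ?_)
  simp only [_root_.add_apply, _root_.smul_apply, proj_apply, smul_eq_mul]
  ring


section Separable

variable {f : (Fin 2 → ℝ) → ℝ} {y : Fin 2 → ℝ} {p q r p' q' r' : ℝ → ℝ} {p'' q'' r'' : ℝ}

theorem pd_eventuallyEq_of_eventuallyEq_mul_add
    (hf : f =ᶠ[𝓝 y] fun z => p (z 0) * q (z 1) + r (z 1))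
    (hp : ∀ᶠ s in 𝓝 (y 0), HasDerivAt p (p' s) s) (hq : ∀ᶠ t in 𝓝 (y 1), HasDerivAt q (q' t) t)
    (hr : ∀ᶠ t in 𝓝 (y 1), HasDerivAt r (r' t) t) :
    (pd 0 f =ᶠ[𝓝 y] fun z => p' (z 0) * q (z 1)) ∧
      pd 1 f =ᶠ[𝓝 y] fun z => p (z 0) * q' (z 1) + r' (z 1) := by
  have hgrad : ∀ᶠ z in 𝓝 y, pd 0 f z = p' (z 0) * q (z 1) ∧
      pd 1 f z = p (z 0) * q' (z 1) + r' (z 1) := by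
    filter_upwards [hf.eventuallyEq_nhds, (continuous_apply 0).continuousAt.eventually hp,
      (continuous_apply 1).continuousAt.eventually hq,
      (continuous_apply 1).continuousAt.eventually hr] with z hfz hpz hqz hrz
    simpa only [pd_congr_of_eventuallyEq hfz] using
      pd_eq_of_hasFDerivAt_fin_two (hasFDerivAt_mul_add_fin_two hpz hqz hrz)
  exact ⟨hgrad.mono fun _ h => h.1, hgrad.mono fun _ h => h.2⟩

theorem hessian_eq_of_eventuallyEq_mul_add
    (hf : f =ᶠ[𝓝 y] fun z => p (z 0) * q (z 1) + r (z 1))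
    (hp : ∀ᶠ s in 𝓝 (y 0), HasDerivAt p (p' s) s) (hq : ∀ᶠ t in 𝓝 (y 1), HasDerivAt q (q' t) t)
    (hr : ∀ᶠ t in 𝓝 (y 1), HasDerivAt r (r' t) t)
    (hp' : HasDerivAt p' p'' (y 0)) (hq' : HasDerivAt q' q'' (y 1))
    (hr' : HasDerivAt r' r'' (y 1)) :
    hessian f y =
      !![p'' * q (y 1), p' (y 0) * q' (y 1); p' (y 0) * q' (y 1), p (y 0) * q'' + r''] := by
  obtain ⟨h0, h1⟩ := pd_eventuallyEq_of_eventuallyEq_mul_add hf hp hq hr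
  have hd0 : HasFDerivAt (pd 0 f)
      ((p'' * q (y 1)) • proj 0 + (p' (y 0) * q' (y 1) + 0) • proj 1 : (Fin 2 → ℝ) →L[ℝ] ℝ) y :=
    (hasFDerivAt_mul_add_fin_two hp' hq.self_of_nhds (hasDerivAt_const (y 1) 0))
      |>.congr_of_eventuallyEq (h0.mono fun _ h => by simp [h])
  obtain ⟨h00, h10⟩ := pd_eq_of_hasFDerivAt_fin_two hd0
  obtain ⟨h01, h11⟩ := pd_eq_of_hasFDerivAt_fin_two <|
    (hasFDerivAt_mul_add_fin_two hp.self_of_nhds hq' hr').congr_of_eventuallyEq h1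
  rw [hessian_fin_two, h00, h10, h01, h11, add_zero]

theorem hessian_eq_of_eventuallyEq_comp_apply_one (hf : f =ᶠ[𝓝 y] fun z => r (z 1))
    (hr : ∀ᶠ t in 𝓝 (y 1), HasDerivAt r (r' t) t) (hr' : HasDerivAt r' r'' (y 1)) :
    hessian f y = !![0, 0; 0, r''] := by
  have hzero {c : ℝ} : ∀ᶠ t in 𝓝 c, HasDerivAt (fun _ => (0 : ℝ)) ((fun _ => 0) t) t :=
    Eventually.of_forall fun t => hasDerivAt_const t 0
  simpa using hessian_eq_of_eventuallyEq_mul_add (p := fun _ => 0) (q := fun _ => 0)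
    (hf.trans (Eventually.of_forall fun z => by simp)) hzero hzero hr
    (hasDerivAt_const _ 0) (hasDerivAt_const _ 0) hr'

end Separable
theorem trace_inv_mul_fin_two {K : Type*} [Field K] (A : Matrix (Fin 2) (Fin 2) K) (c : K) :
    trace (A⁻¹ * !![0, 0; 0, c]) = A 0 0 * c / A.det := by
  rw [inv_def, adjugate_fin_two, Ring.inverse_eq_inv']
  simp [trace_fin_two]
  ring

theorem ΦN_eq_mul_add (z : Fin 2 → ℝ) :
    ΦN z = -(z 0) ^ 2 / 4 * (z 1)⁻¹ + -(1 / 2) * log (z 1) := by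
  rw [ΦN, log_neg_eq_log]
  ring

theorem hasDerivAt_neg_inv_sq {t : ℝ} (ht : t ≠ 0) :
    HasDerivAt (fun s : ℝ => -(s ^ 2)⁻¹) (2 * (t ^ 3)⁻¹) t :=
  ((hasDerivAt_pow 2 t).fun_inv (pow_ne_zero 2 ht)).fun_neg.congr_deriv (by field_simp; ring)

theorem hessian_ΦN {y : Fin 2 → ℝ} (hy : y 1 ≠ 0) :
    hessian ΦN y = !![-1 / (2 * y 1), y 0 / (2 * (y 1) ^ 2);
      y 0 / (2 * (y 1) ^ 2), -(y 0) ^ 2 / (2 * (y 1) ^ 3) + 1 / (2 * (y 1) ^ 2)] := by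
  have hne : ∀ᶠ t in 𝓝 (y 1), t ≠ 0 := eventually_ne_nhds hy
  rw [hessian_eq_of_eventuallyEq_mul_add (p := fun s => -s ^ 2 / 4) (q := fun t => t⁻¹)
    (r := fun t => -(1 / 2) * log t) (p' := fun s => -s / 2) (q' := fun t => -(t ^ 2)⁻¹)
    (r' := fun t => -(1 / 2) * t⁻¹) (p'' := -1 / 2) (q'' := 2 * (y 1 ^ 3)⁻¹)
    (r'' := (1 / 2) * (y 1 ^ 2)⁻¹)
    (Eventually.of_forall ΦN_eq_mul_add)
    (Eventually.of_forall fun s => ((hasDerivAt_pow 2 s).fun_neg.div_const 4).congr_deriv (by ring))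
    (hne.mono fun t ht => hasDerivAt_inv ht)
    (hne.mono fun t ht => (hasDerivAt_log ht).const_mul _)
    ((hasDerivAt_id (y 0)).fun_neg.div_const 2)
    (hasDerivAt_neg_inv_sq hy)
    (((hasDerivAt_inv hy).const_mul (-(1 / 2) : ℝ)).congr_deriv (by ring))]
  simp only [EmbeddingLike.apply_eq_iff_eq, vecCons_inj, and_true]
  refine ⟨⟨?_, ?_⟩, ?_, ?_⟩ <;> field_simp
  ring

theorem det_hessian_ΦN {y : Fin 2 → ℝ} (hy : y 1 ≠ 0) :
    (hessian ΦN y).det = -1 / (4 * (y 1) ^ 3) := by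
  rw [hessian_ΦN hy, det_fin_two_of]
  field_simp
  ring

theorem log_det_hessian_ΦN {z : Fin 2 → ℝ} (hz : z 1 ≠ 0) :
    log (hessian ΦN z).det = -3 * log (z 1) - log 4 := by
  rw [det_hessian_ΦN hz, neg_div, log_neg_eq_log, one_div, log_inv,
    log_mul (by norm_num) (pow_ne_zero 3 hz), log_pow]
  push_cast
  ring

theorem hessian_log_det_hessian_ΦN {y : Fin 2 → ℝ} (hy : y 1 ≠ 0) :
    hessian (fun z => log (hessian ΦN z).det) y = !![(0 : ℝ), 0; 0, 3 / (y 1) ^ 2] := by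
  have hne : ∀ᶠ t in 𝓝 (y 1), t ≠ 0 := eventually_ne_nhds hy
  refine hessian_eq_of_eventuallyEq_comp_apply_one (r := fun t => -3 * log t - log 4)
    (r' := fun t => -3 * t⁻¹) ?_ (hne.mono fun t ht => ?_) ?_
  · exact (continuous_apply 1).continuousAt.eventually hne |>.mono fun z => log_det_hessian_ΦN
  · exact ((hasDerivAt_log ht).const_mul (-3 : ℝ)).sub_const (log 4)
  · exact ((hasDerivAt_inv hy).const_mul (-3 : ℝ)).congr_deriv (by field_simp)

/-- The Siegel-Jacobi metric has Ricci form `diag(0, -3/(x²)²)` and constant scalar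
curvature `-6`: explicit formulas for `det g`, the Hessian of `log det g`, and the
trace of `g⁻¹ · Hess(log det g)`. -/
theorem siegelJacobi_scalar_curvature (x : Fin 2 → ℝ) (hx : x 1 < 0) :
    (hessian ΦN x).det = -1 / (4 * (x 1) ^ 3) ∧
    hessian (fun y => Real.log ((hessian ΦN y).det)) x =
      !![(0 : ℝ), 0; 0, 3 / (x 1) ^ 2] ∧
    Matrix.trace ((hessian ΦN x)⁻¹ *
      hessian (fun y => Real.log ((hessian ΦN y).det)) x) = 6 := by
  have hx' : x 1 ≠ 0 := hx.ne
  refine ⟨det_hessian_ΦN hx', hessian_log_det_hessian_ΦN hx', ?_⟩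
  rw [hessian_log_det_hessian_ΦN hx', trace_inv_mul_fin_two, det_hessian_ΦN hx', hessian_ΦN hx']
  simp only [of_apply, cons_val', cons_val_zero, empty_val', cons_val_fin_one]
  field_simp
  ring
end

section
/- Let Ω ⊆ ℝ² be open and let Φ : Ω → ℝ be C³ with positive definite Hessian at every point. Write Φ_{ijk} for the third partial derivatives and Φ^{pq} for the entries of the inverse Hessian matrix. Then Φ satisfies the WDVV equations — i.e. Σ_{p,q} Φ^{pq} Φ_{jlp} Φ_{ikq} = Σ_{p,q} Φ^{pq} Φ_{ilp} Φ_{jkq} for all indices i,j,k,l ∈ {1,2} at every point of Ω — if and only if Φ satisfies the single scalar equation Σ_{i,j,k,l,p,q} Φ^{jl} Φ^{ik} Φ^{pq} Φ_{jlp} Φ_{ikq} = Σ_{i,j,k,l,p,q} Φ^{jl} Φ^{ik} Φ^{pq} Φ_{ilp} Φ_{jkq} at every point of Ω. -/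
open Real Matrix

/-- Third partial derivatives `Φ_{ijk}` of `f : ℝⁿ → ℝ`. -/
noncomputable def pd3 {n : ℕ} (f : (Fin n → ℝ) → ℝ) (i j k : Fin n) (x : Fin n → ℝ) : ℝ :=
  pd i (pd j (pd k f)) x

lemma wdvv_key (m : Matrix (Fin 2) (Fin 2) ℝ) (hm : m 0 1 = m 1 0)
    (hd : m 0 0 * m 1 1 - m 1 0 * m 1 0 ≠ 0) (t : Fin 2 → Fin 2 → Fin 2 → ℝ) :
    (∀ i j k l : Fin 2,
        ∑ p : Fin 2, ∑ q : Fin 2, m p q * t j l p * t i k q =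
        ∑ p : Fin 2, ∑ q : Fin 2, m p q * t i l p * t j k q) ↔
    (∑ i : Fin 2, ∑ j : Fin 2, ∑ k : Fin 2, ∑ l : Fin 2, ∑ p : Fin 2, ∑ q : Fin 2,
        m j l * m i k * m p q * t j l p * t i k q =
     ∑ i : Fin 2, ∑ j : Fin 2, ∑ k : Fin 2, ∑ l : Fin 2, ∑ p : Fin 2, ∑ q : Fin 2,
        m j l * m i k * m p q * t i l p * t j k q) := by
  constructor
  · intro h
    have h' : ∀ i j k l : Fin 2,
        m 0 0 * t j l 0 * t i k 0 + m 0 1 * t j l 0 * t i k 1 +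
        (m 1 0 * t j l 1 * t i k 0 + m 1 1 * t j l 1 * t i k 1) =
        m 0 0 * t i l 0 * t j k 0 + m 0 1 * t i l 0 * t j k 1 +
        (m 1 0 * t i l 1 * t j k 0 + m 1 1 * t i l 1 * t j k 1) := by
      intro i j k l
      have := h i j k l
      simpa [Fin.sum_univ_two] using this
    simp only [Fin.sum_univ_two]
    linear_combination
      m 0 0 * m 0 0 * h' 0 0 0 0 + m 0 1 * m 0 0 * h' 0 0 0 1 +
      m 0 0 * m 0 1 * h' 0 0 1 0 + m 0 1 * m 0 1 * h' 0 0 1 1 +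
      m 1 0 * m 0 0 * h' 0 1 0 0 + m 1 1 * m 0 0 * h' 0 1 0 1 +
      m 1 0 * m 0 1 * h' 0 1 1 0 + m 1 1 * m 0 1 * h' 0 1 1 1 +
      m 0 0 * m 1 0 * h' 1 0 0 0 + m 0 1 * m 1 0 * h' 1 0 0 1 +
      m 0 0 * m 1 1 * h' 1 0 1 0 + m 0 1 * m 1 1 * h' 1 0 1 1 +
      m 1 0 * m 1 0 * h' 1 1 0 0 + m 1 1 * m 1 0 * h' 1 1 0 1 +
      m 1 0 * m 1 1 * h' 1 1 1 0 + m 1 1 * m 1 1 * h' 1 1 1 1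
  · intro h
    simp only [Fin.sum_univ_two] at h
    rw [hm] at h
    set a : ℝ :=
      m 0 0 * t 1 1 0 * t 0 0 0 + m 1 0 * t 1 1 0 * t 0 0 1 +
      m 1 0 * t 1 1 1 * t 0 0 0 + m 1 1 * t 1 1 1 * t 0 0 1 -
      (m 0 0 * t 0 1 0 * t 1 0 0 + m 1 0 * t 0 1 0 * t 1 0 1 +
       m 1 0 * t 0 1 1 * t 1 0 0 + m 1 1 * t 0 1 1 * t 1 0 1) with ha
    have h2 : 2 * (m 0 0 * m 1 1 - m 1 0 * m 1 0) * a = 0 := by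
      rw [ha]; linear_combination h
    have hA : a = 0 := by
      have h2' : (2 : ℝ) * (m 0 0 * m 1 1 - m 1 0 * m 1 0) ≠ 0 := by
        intro hc
        apply hd
        linarith
      exact (mul_eq_zero.mp h2).resolve_left h2'
    rw [ha] at hA
    simp only [Fin.forall_fin_two, Fin.sum_univ_two]
    rw [hm]
    repeat' apply And.intro
    all_goals
      first
        | trivial
        | ring1
        | linear_combination hA
        | linear_combination -hA

/-- In dimension two, a convex potential satisfies the WDVV equations if and only if
it satisfies the single fully contracted scalar equation. -/
theorem wdvv_dim2_iff_scalar (Ω : Set (Fin 2 → ℝ)) (hΩ : IsOpen Ω)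
    (Φ : (Fin 2 → ℝ) → ℝ) (hC3 : ContDiffOn ℝ 3 Φ Ω)
    (hpos : ∀ x ∈ Ω, (hessian Φ x).PosDef) :
    (∀ x ∈ Ω, ∀ i j k l : Fin 2,
        ∑ p : Fin 2, ∑ q : Fin 2,
          (hessian Φ x)⁻¹ p q * pd3 Φ j l p x * pd3 Φ i k q x =
        ∑ p : Fin 2, ∑ q : Fin 2,
          (hessian Φ x)⁻¹ p q * pd3 Φ i l p x * pd3 Φ j k q x) ↔
    (∀ x ∈ Ω,
        ∑ i : Fin 2, ∑ j : Fin 2, ∑ k : Fin 2, ∑ l : Fin 2, ∑ p : Fin 2, ∑ q : Fin 2,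
          (hessian Φ x)⁻¹ j l * (hessian Φ x)⁻¹ i k * (hessian Φ x)⁻¹ p q *
            pd3 Φ j l p x * pd3 Φ i k q x =
        ∑ i : Fin 2, ∑ j : Fin 2, ∑ k : Fin 2, ∑ l : Fin 2, ∑ p : Fin 2, ∑ q : Fin 2,
          (hessian Φ x)⁻¹ j l * (hessian Φ x)⁻¹ i k * (hessian Φ x)⁻¹ p q *
            pd3 Φ i l p x * pd3 Φ j k q x) := by
  refine forall₂_congr fun x hx => ?_
  have hpd := hpos x hx
  have hherm : ((hessian Φ x)⁻¹).IsHermitian := hpd.1.inv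
  have hm : (hessian Φ x)⁻¹ 0 1 = (hessian Φ x)⁻¹ 1 0 := by
    have := congrFun (congrFun hherm 1) 0
    simpa using this
  have hdet : (hessian Φ x).det ≠ 0 := ne_of_gt hpd.det_pos
  have hd : (hessian Φ x)⁻¹ 0 0 * (hessian Φ x)⁻¹ 1 1 -
      (hessian Φ x)⁻¹ 1 0 * (hessian Φ x)⁻¹ 1 0 ≠ 0 := by
    have hdi : ((hessian Φ x)⁻¹).det ≠ 0 := by
      rw [Matrix.det_nonsing_inv, Ring.inverse_eq_inv]
      exact inv_ne_zero hdet
    rw [Matrix.det_fin_two, hm] at hdi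
    exact hdi
  exact wdvv_key ((hessian Φ x)⁻¹) hm hd (fun a b c => pd3 Φ a b c x)
end

section
/- Let Ω, Ω* ⊆ ℝⁿ be open, let Φ : Ω → ℝ be smooth with positive definite Hessian at every point, suppose the gradient map ∇Φ is a bijection from Ω onto Ω*, and let Φ* : Ω* → ℝ be smooth with ∇Φ*(∇Φ(x)) = x for all x ∈ Ω (the Legendre dual of Φ). If Φ satisfies the WDVV equations Σ_{p,q} Φ^{pq} Φ_{jlp} Φ_{ikq} = Σ_{p,q} Φ^{pq} Φ_{ilp} Φ_{jkq} for all indices i,j,k,l at every point of Ω, then Φ* satisfies the WDVV equations (with derivatives taken in the dual variables u on Ω*) at every point of Ω*. -/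
open Real Matrix

/-- The gradient map of `f : ℝⁿ → ℝ`. -/
noncomputable def gradMap {n : ℕ} (f : (Fin n → ℝ) → ℝ) (x : Fin n → ℝ) : Fin n → ℝ :=
  fun i => pd i f x

private lemma pd_contDiffOn {n : ℕ} {Ω : Set (Fin n → ℝ)} (hΩ : IsOpen Ω)
    {f : (Fin n → ℝ) → ℝ} (hf : ContDiffOn ℝ (⊤ : ℕ∞) f Ω) (i : Fin n) :
    ContDiffOn ℝ (⊤ : ℕ∞) (pd i f) Ω :=
  (hf.fderiv_of_isOpen hΩ (by simp)).clm_apply contDiffOn_const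

private lemma hasFDerivAt_of_cdo {n : ℕ} {Ω : Set (Fin n → ℝ)} (hΩ : IsOpen Ω)
    {f : (Fin n → ℝ) → ℝ} (hf : ContDiffOn ℝ (⊤ : ℕ∞) f Ω) {x : Fin n → ℝ} (hx : x ∈ Ω) :
    HasFDerivAt f (fderiv ℝ f x) x :=
  ((hf.contDiffAt (hΩ.mem_nhds hx)).differentiableAt (by simp)).hasFDerivAt

private lemma clm_apply_eq_sum {n : ℕ} (L : (Fin n → ℝ) →L[ℝ] ℝ) (v : Fin n → ℝ) :
    L v = ∑ r, v r * L (Pi.single r 1) := by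
  have hv : v = ∑ r, v r • (Pi.single r 1 : Fin n → ℝ) := by
    funext k
    simp [Finset.sum_apply, Pi.single_apply, Finset.sum_ite_eq']
  conv_lhs => rw [hv]
  rw [map_sum]
  simp [smul_eq_mul]

private lemma pd_comm {n : ℕ} {Ω : Set (Fin n → ℝ)} (hΩ : IsOpen Ω)
    {f : (Fin n → ℝ) → ℝ} (hf : ContDiffOn ℝ (⊤ : ℕ∞) f Ω) {x : Fin n → ℝ} (hx : x ∈ Ω)
    (i j : Fin n) : pd i (pd j f) x = pd j (pd i f) x := by
  have hfx : ContDiffAt ℝ (⊤ : ℕ∞) f x := hf.contDiffAt (hΩ.mem_nhds hx)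
  have hsymm : IsSymmSndFDerivAt ℝ f x := hfx.isSymmSndFDerivAt (by rw [minSmoothness_of_isRCLikeNormedField]; exact WithTop.coe_le_coe.mpr le_top)
  have hdiff : DifferentiableAt ℝ (fderiv ℝ f) x :=
    (hfx.fderiv_right (m := 1) (WithTop.coe_le_coe.mpr le_top)).differentiableAt one_ne_zero
  have key : ∀ v w : Fin n → ℝ,
      fderiv ℝ (fun y => fderiv ℝ f y v) x w = fderiv ℝ (fderiv ℝ f) x w v := by
    intro v w
    rw [fderiv_clm_apply hdiff (differentiableAt_const v)]
    simp
  show fderiv ℝ (fun y => fderiv ℝ f y (Pi.single j 1)) x (Pi.single i 1) = _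
  rw [key]
  rw [hsymm (Pi.single i 1) (Pi.single j 1)]
  exact (key (Pi.single i 1) (Pi.single j 1)).symm

private lemma pd_comp_gradMap {n : ℕ} {Ω Ωs : Set (Fin n → ℝ)} (hΩ : IsOpen Ω)
    (hΩs : IsOpen Ωs) {Φ g : (Fin n → ℝ) → ℝ} (hΦ : ContDiffOn ℝ (⊤ : ℕ∞) Φ Ω)
    (hg : ContDiffOn ℝ (⊤ : ℕ∞) g Ωs) {x : Fin n → ℝ} (hx : x ∈ Ω)
    (hu : gradMap Φ x ∈ Ωs) (m : Fin n) :
    HasFDerivAt (fun y => g (gradMap Φ y))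
      ((fderiv ℝ g (gradMap Φ x)).comp
        (ContinuousLinearMap.pi (fun r => fderiv ℝ (pd r Φ) x))) x ∧
    ((fderiv ℝ g (gradMap Φ x)).comp
        (ContinuousLinearMap.pi (fun r => fderiv ℝ (pd r Φ) x))) (Pi.single m 1)
      = ∑ r, pd m (pd r Φ) x * pd r g (gradMap Φ x) := by
  constructor
  · exact (hasFDerivAt_of_cdo hΩs hg hu).comp x
      (hasFDerivAt_pi.2 fun r => hasFDerivAt_of_cdo hΩ (pd_contDiffOn hΩ hΦ r) hx)
  · rw [ContinuousLinearMap.comp_apply]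
    rw [clm_apply_eq_sum (fderiv ℝ g (gradMap Φ x))]
    refine Finset.sum_congr rfl fun r _ => ?_
    simp [pd]

private lemma step1 {n : ℕ} {Ω Ωs : Set (Fin n → ℝ)} (hΩ : IsOpen Ω) (hΩs : IsOpen Ωs)
    {Φ Φs : (Fin n → ℝ) → ℝ} (hΦ : ContDiffOn ℝ (⊤ : ℕ∞) Φ Ω) (hΦs : ContDiffOn ℝ (⊤ : ℕ∞) Φs Ωs)
    (hmaps : Set.MapsTo (gradMap Φ) Ω Ωs)
    (hdual : ∀ x ∈ Ω, gradMap Φs (gradMap Φ x) = x)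
    {y : Fin n → ℝ} (hy : y ∈ Ω) (i j : Fin n) :
    ∑ k, pd j (pd k Φ) y * pd k (pd i Φs) (gradMap Φ y) = if i = j then 1 else 0 := by
  obtain ⟨hcomp, happ⟩ :=
    pd_comp_gradMap hΩ hΩs hΦ (pd_contDiffOn hΩs hΦs i) hy (hmaps hy) j
  have heq : (fun z => (pd i Φs) (gradMap Φ z)) =ᶠ[nhds y] (fun z => z i) := by
    filter_upwards [hΩ.mem_nhds hy] with z hz
    exact congrFun (hdual z hz) i
  calc ∑ k, pd j (pd k Φ) y * pd k (pd i Φs) (gradMap Φ y)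
      = fderiv ℝ (fun z => (pd i Φs) (gradMap Φ z)) y (Pi.single j 1) := by
        rw [← happ, hcomp.fderiv]
    _ = fderiv ℝ (fun z : Fin n → ℝ => z i) y (Pi.single j 1) := by rw [heq.fderiv_eq]
    _ = if i = j then 1 else 0 := by
        rw [(hasFDerivAt_apply i y).fderiv]
        simp [Pi.single_apply]

private lemma step4 {n : ℕ} {Ω Ωs : Set (Fin n → ℝ)} (hΩ : IsOpen Ω) (hΩs : IsOpen Ωs)
    {Φ Φs : (Fin n → ℝ) → ℝ} (hΦ : ContDiffOn ℝ (⊤ : ℕ∞) Φ Ω) (hΦs : ContDiffOn ℝ (⊤ : ℕ∞) Φs Ωs)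
    (hmaps : Set.MapsTo (gradMap Φ) Ω Ωs)
    (hdual : ∀ x ∈ Ω, gradMap Φs (gradMap Φ x) = x)
    {x : Fin n → ℝ} (hx : x ∈ Ω) (i j m : Fin n) :
    ∑ k, (pd3 Φ m j k x * pd k (pd i Φs) (gradMap Φ x)
      + pd j (pd k Φ) x * ∑ r, pd m (pd r Φ) x * pd3 Φs r k i (gradMap Φ x)) = 0 := by
  have hu : gradMap Φ x ∈ Ωs := hmaps hx
  set u := gradMap Φ x with hu_def
  -- functions
  have hFd : ∀ k : Fin n, HasFDerivAt (pd j (pd k Φ)) (fderiv ℝ (pd j (pd k Φ)) x) x :=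
    fun k => hasFDerivAt_of_cdo hΩ (pd_contDiffOn hΩ (pd_contDiffOn hΩ hΦ k) j) hx
  have hGall := fun k : Fin n =>
    pd_comp_gradMap hΩ hΩs hΦ (pd_contDiffOn hΩs (pd_contDiffOn hΩs hΦs i) k) hx hu m
  have hh : HasFDerivAt
      (fun y => ∑ k, pd j (pd k Φ) y * pd k (pd i Φs) (gradMap Φ y))
      (∑ k, (pd j (pd k Φ) x •
          ((fderiv ℝ (pd k (pd i Φs)) u).comp
            (ContinuousLinearMap.pi (fun r => fderiv ℝ (pd r Φ) x)))
        + pd k (pd i Φs) u • fderiv ℝ (pd j (pd k Φ)) x)) x :=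
    HasFDerivAt.fun_sum fun k _ => (hFd k).mul (hGall k).1
  have hconst : (fun y => ∑ k, pd j (pd k Φ) y * pd k (pd i Φs) (gradMap Φ y))
      =ᶠ[nhds x] (fun _ => if i = j then 1 else 0) := by
    filter_upwards [hΩ.mem_nhds hx] with z hz
    exact step1 hΩ hΩs hΦ hΦs hmaps hdual hz i j
  have hzero : fderiv ℝ (fun y => ∑ k, pd j (pd k Φ) y * pd k (pd i Φs) (gradMap Φ y)) x
      = 0 := by
    rw [hconst.fderiv_eq]
    exact fderiv_const_apply (if i = j then (1:ℝ) else 0)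
  have hfd := hh.fderiv
  rw [hzero] at hfd
  have happlied := congrArg (fun (L : (Fin n → ℝ) →L[ℝ] ℝ) => L (Pi.single m 1)) hfd
  simp only [ContinuousLinearMap.zero_apply, ContinuousLinearMap.sum_apply,
    ContinuousLinearMap.add_apply, ContinuousLinearMap.smul_apply, smul_eq_mul] at happlied
  have hstep : ∀ k : Fin n, pd3 Φ m j k x * pd k (pd i Φs) u
      + pd j (pd k Φ) x * ∑ r, pd m (pd r Φ) x * pd3 Φs r k i u
      = pd j (pd k Φ) x * ((fderiv ℝ (pd k (pd i Φs)) u).comp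
          (ContinuousLinearMap.pi fun r => fderiv ℝ (pd r Φ) x)) (Pi.single m 1)
        + pd k (pd i Φs) u * fderiv ℝ (pd j (pd k Φ)) x (Pi.single m 1) := by
    intro k
    rw [(hGall k).2]
    simp only [pd3, pd]
    ring
  calc ∑ k, (pd3 Φ m j k x * pd k (pd i Φs) u
        + pd j (pd k Φ) x * ∑ r, pd m (pd r Φ) x * pd3 Φs r k i u)
      = ∑ k, (pd j (pd k Φ) x * ((fderiv ℝ (pd k (pd i Φs)) u).comp
          (ContinuousLinearMap.pi fun r => fderiv ℝ (pd r Φ) x)) (Pi.single m 1)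
        + pd k (pd i Φs) u * fderiv ℝ (pd j (pd k Φ)) x (Pi.single m 1)) :=
        Finset.sum_congr rfl fun k _ => hstep k
    _ = 0 := happlied.symm

private lemma swapd1 {M : Type*} [AddCommMonoid M] {ι : Type*} [Fintype ι]
    (f : ι → ι → M) : ∑ a, ∑ b, f a b = ∑ b, ∑ a, f a b := Finset.sum_comm

private lemma swapd2 {M : Type*} [AddCommMonoid M] {ι : Type*} [Fintype ι]
    (f : ι → ι → ι → M) : ∑ a, ∑ b, ∑ c, f a b c = ∑ a, ∑ c, ∑ b, f a b c :=
  Finset.sum_congr rfl fun _ _ => Finset.sum_comm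

private lemma swapd3 {M : Type*} [AddCommMonoid M] {ι : Type*} [Fintype ι]
    (f : ι → ι → ι → ι → M) :
    ∑ a, ∑ b, ∑ c, ∑ d, f a b c d = ∑ a, ∑ b, ∑ d, ∑ c, f a b c d :=
  Finset.sum_congr rfl fun _ _ => Finset.sum_congr rfl fun _ _ => Finset.sum_comm

private lemma swapd4 {M : Type*} [AddCommMonoid M] {ι : Type*} [Fintype ι]
    (f : ι → ι → ι → ι → ι → M) :
    ∑ a, ∑ b, ∑ c, ∑ d, ∑ e, f a b c d e = ∑ a, ∑ b, ∑ c, ∑ e, ∑ d, f a b c d e :=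
  Finset.sum_congr rfl fun _ _ => Finset.sum_congr rfl fun _ _ =>
    Finset.sum_congr rfl fun _ _ => Finset.sum_comm

private lemma swapd5 {M : Type*} [AddCommMonoid M] {ι : Type*} [Fintype ι]
    (f : ι → ι → ι → ι → ι → ι → M) :
    ∑ a, ∑ b, ∑ c, ∑ d, ∑ e, ∑ g, f a b c d e g
      = ∑ a, ∑ b, ∑ c, ∑ d, ∑ g, ∑ e, f a b c d e g :=
  Finset.sum_congr rfl fun _ _ => Finset.sum_congr rfl fun _ _ =>
    Finset.sum_congr rfl fun _ _ => Finset.sum_congr rfl fun _ _ => Finset.sum_comm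

private lemma hfactor {n : ℕ} (X Y : Fin n → ℝ) (s : ℝ) :
    (∑ p, X p) * ((∑ m, Y m) * s) = ∑ p, ∑ m, X p * (Y m * s) := by
  rw [Finset.sum_mul]
  refine Finset.sum_congr rfl fun p _ => ?_
  rw [Finset.sum_mul, Finset.mul_sum]

private lemma hexp2 {n : ℕ} (c : ℝ) (X Y : Fin n → ℝ) :
    c * (∑ a, X a) * (∑ b, Y b) = ∑ a, ∑ b, X a * (Y b * c) := by
  have h : c * (∑ a, X a) * (∑ b, Y b) = (∑ a, X a) * ((∑ b, Y b) * c) := by ring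
  rw [h, hfactor]

private lemma hexp3 {n : ℕ} (c : ℝ) (X Y : Fin n → Fin n → ℝ) :
    (∑ m, ∑ p, X m p) * ((∑ m, ∑ p, Y m p) * c)
      = ∑ m1, ∑ p1, ∑ m2, ∑ p2, X m1 p1 * (Y m2 p2 * c) := by
  rw [Finset.sum_mul]
  refine Finset.sum_congr rfl fun m1 _ => ?_
  rw [Finset.sum_mul]
  refine Finset.sum_congr rfl fun p1 _ => ?_
  rw [Finset.sum_mul, Finset.mul_sum]
  refine Finset.sum_congr rfl fun m2 _ => ?_
  rw [Finset.sum_mul, Finset.mul_sum]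

private lemma algebra_main {n : ℕ} (A B : Matrix (Fin n) (Fin n) ℝ)
    (T S : Fin n → Fin n → Fin n → ℝ)
    (hBA : ∀ a b, ∑ t, B a t * A t b = (if a = b then (1:ℝ) else 0))
    (hBsymm : ∀ a b, B a b = B b a)
    (hlin : ∀ c d m, ∑ k, A d k * (∑ r, A m r * S r k c) = -∑ q, T m d q * B q c)
    (hw : ∀ i j k l, ∑ p, ∑ q, B p q * T j l p * T i k q
        = ∑ p, ∑ q, B p q * T i l p * T j k q)
    (i j k l : Fin n) :
    ∑ p, ∑ q, A p q * S j l p * S i k q = ∑ p, ∑ q, A p q * S i l p * S j k q := by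
  -- step E1 : double inversion
  have E1 : ∀ a b c,
      ∑ m, ∑ p, B a m * (B b p * (∑ k', A p k' * (∑ r, A m r * S r k' c)))
        = S a b c := by
    intro a b c
    calc ∑ m, ∑ p, B a m * (B b p * (∑ k', A p k' * (∑ r, A m r * S r k' c)))
        = ∑ m, ∑ p, ∑ k', ∑ r, B a m * (B b p * (A p k' * (A m r * S r k' c))) := by
          refine Finset.sum_congr rfl fun m _ => Finset.sum_congr rfl fun p _ => ?_
          simp only [Finset.mul_sum]
      _ = ∑ k', ∑ r, ∑ p, ∑ m, B a m * (B b p * (A p k' * (A m r * S r k' c))) := by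
          rw [swapd1, swapd2, swapd1, swapd3, swapd2]
      _ = ∑ k', ∑ r, (∑ p, B b p * A p k') * ((∑ m, B a m * A m r) * S r k' c) := by
          refine Finset.sum_congr rfl fun k' _ => Finset.sum_congr rfl fun r _ => ?_
          rw [hfactor]
          exact Finset.sum_congr rfl fun p _ => Finset.sum_congr rfl fun m _ => by ring
      _ = ∑ k', ∑ r, (if b = k' then (1:ℝ) else 0) * ((if a = r then (1:ℝ) else 0)
            * S r k' c) := by
          refine Finset.sum_congr rfl fun k' _ => Finset.sum_congr rfl fun r _ => ?_
          rw [hBA b k', hBA a r]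
      _ = S a b c := by
          simp [ite_mul, Finset.sum_ite_eq]
  -- step f5' : factored formula for S
  have f5' : ∀ a b c, S a b c
      = ∑ q, (-∑ m, ∑ p, B a m * (B b p * T m p q)) * B q c := by
    intro a b c
    rw [← E1 a b c]
    calc ∑ m, ∑ p, B a m * (B b p * (∑ k', A p k' * (∑ r, A m r * S r k' c)))
        = ∑ m, ∑ p, B a m * (B b p * (-∑ q, T m p q * B q c)) := by
          refine Finset.sum_congr rfl fun m _ => Finset.sum_congr rfl fun p _ => ?_
          rw [hlin c p m]
      _ = ∑ m, ∑ p, ∑ q, -(B a m * (B b p * (T m p q * B q c))) := by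
          refine Finset.sum_congr rfl fun m _ => Finset.sum_congr rfl fun p _ => ?_
          simp only [mul_neg, Finset.mul_sum, Finset.sum_neg_distrib]
      _ = ∑ q, ∑ m, ∑ p, -(B a m * (B b p * (T m p q * B q c))) := by
          rw [swapd2, swapd1]
      _ = ∑ q, (-∑ m, ∑ p, B a m * (B b p * T m p q)) * B q c := by
          refine Finset.sum_congr rfl fun q _ => ?_
          simp only [neg_mul, Finset.sum_mul, Finset.sum_neg_distrib]
          congr 1
          exact Finset.sum_congr rfl fun m _ => Finset.sum_congr rfl fun p _ => by ring
  -- contraction lemma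
  have hcontr : ∀ q1 q2, ∑ p, ∑ q, A p q * (B q1 p * B q2 q) = B q2 q1 := by
    intro q1 q2
    calc ∑ p, ∑ q, A p q * (B q1 p * B q2 q)
        = ∑ q, ∑ p, (B q1 p * A p q) * B q2 q := by
          rw [Finset.sum_comm]
          exact Finset.sum_congr rfl fun q _ => Finset.sum_congr rfl fun p _ => by ring
      _ = ∑ q, (∑ p, B q1 p * A p q) * B q2 q := by
          exact Finset.sum_congr rfl fun q _ => (Finset.sum_mul _ _ _).symm
      _ = ∑ q, (if q1 = q then (1:ℝ) else 0) * B q2 q := by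
          exact Finset.sum_congr rfl fun q _ => by rw [hBA q1 q]
      _ = B q2 q1 := by simp [ite_mul, Finset.sum_ite_eq]
  -- claim2 : the expansion
  have claim2 : ∀ a b d e, ∑ p, ∑ q, A p q * S a b p * S d e q
      = ∑ m1, ∑ p1, ∑ m2, ∑ p2, B a m1 * (B b p1 * (B d m2 * (B e p2
          * (∑ q1, ∑ q2, B q2 q1 * (T m1 p1 q1 * T m2 p2 q2))))) := by
    intro a b d e
    calc ∑ p, ∑ q, A p q * S a b p * S d e q
        = ∑ p, ∑ q, A p q * (∑ q1, (-∑ m, ∑ p', B a m * (B b p' * T m p' q1)) * B q1 p)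
            * (∑ q2, (-∑ m, ∑ p', B d m * (B e p' * T m p' q2)) * B q2 q) := by
          refine Finset.sum_congr rfl fun p _ => Finset.sum_congr rfl fun q _ => ?_
          rw [f5' a b p, f5' d e q]
      _ = ∑ p, ∑ q, ∑ q1, ∑ q2,
            ((-∑ m, ∑ p', B a m * (B b p' * T m p' q1)) * B q1 p
              * (((-∑ m, ∑ p', B d m * (B e p' * T m p' q2)) * B q2 q)
                * A p q)) := by
          refine Finset.sum_congr rfl fun p _ => Finset.sum_congr rfl fun q _ => ?_
          rw [hexp2]
      _ = ∑ q1, ∑ q2, ∑ p, ∑ q,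
            ((-∑ m, ∑ p', B a m * (B b p' * T m p' q1)) * B q1 p
              * (((-∑ m, ∑ p', B d m * (B e p' * T m p' q2)) * B q2 q)
                * A p q)) := by
          rw [swapd2, swapd1, swapd3, swapd2]
      _ = ∑ q1, ∑ q2,
            ((-∑ m, ∑ p', B a m * (B b p' * T m p' q1))
              * ((-∑ m, ∑ p', B d m * (B e p' * T m p' q2)) * B q2 q1)) := by
          refine Finset.sum_congr rfl fun q1 _ => Finset.sum_congr rfl fun q2 _ => ?_
          rw [← hcontr q1 q2]
          simp only [Finset.mul_sum]
          refine Finset.sum_congr rfl fun p _ => Finset.sum_congr rfl fun q _ => by ring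
      _ = ∑ q1, ∑ q2, ∑ m1, ∑ p1, ∑ m2, ∑ p2,
            B a m1 * (B b p1 * (B d m2 * (B e p2
              * (B q2 q1 * (T m1 p1 q1 * T m2 p2 q2))))) := by
          refine Finset.sum_congr rfl fun q1 _ => Finset.sum_congr rfl fun q2 _ => ?_
          have hneg : (-∑ m, ∑ p', B a m * (B b p' * T m p' q1))
              * ((-∑ m, ∑ p', B d m * (B e p' * T m p' q2)) * B q2 q1)
              = (∑ m, ∑ p', B a m * (B b p' * T m p' q1))
              * ((∑ m, ∑ p', B d m * (B e p' * T m p' q2)) * B q2 q1) := by ring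
          rw [hneg, hexp3]
          refine Finset.sum_congr rfl fun m1 _ => Finset.sum_congr rfl fun p1 _ =>
            Finset.sum_congr rfl fun m2 _ => Finset.sum_congr rfl fun p2 _ => by ring
      _ = ∑ m1, ∑ p1, ∑ m2, ∑ p2, ∑ q1, ∑ q2,
            B a m1 * (B b p1 * (B d m2 * (B e p2
              * (B q2 q1 * (T m1 p1 q1 * T m2 p2 q2))))) := by
          rw [swapd2, swapd3, swapd4, swapd5, swapd1, swapd2, swapd3, swapd4]
      _ = ∑ m1, ∑ p1, ∑ m2, ∑ p2, B a m1 * (B b p1 * (B d m2 * (B e p2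
            * (∑ q1, ∑ q2, B q2 q1 * (T m1 p1 q1 * T m2 p2 q2))))) := by
          refine Finset.sum_congr rfl fun m1 _ => Finset.sum_congr rfl fun p1 _ =>
            Finset.sum_congr rfl fun m2 _ => Finset.sum_congr rfl fun p2 _ => ?_
          simp only [← Finset.mul_sum]
  -- symmetry of the inner contraction, from WDVV
  have hC : ∀ a b c d, (∑ q1, ∑ q2, B q2 q1 * (T a b q1 * T c d q2))
      = ∑ q1, ∑ q2, B q2 q1 * (T c b q1 * T a d q2) := by
    intro a b c d
    have h := hw c a d b
    calc ∑ q1, ∑ q2, B q2 q1 * (T a b q1 * T c d q2)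
        = ∑ q1, ∑ q2, B q1 q2 * T a b q1 * T c d q2 := by
          refine Finset.sum_congr rfl fun q1 _ => Finset.sum_congr rfl fun q2 _ => ?_
          rw [hBsymm q2 q1]; ring
      _ = ∑ q1, ∑ q2, B q1 q2 * T c b q1 * T a d q2 := h
      _ = ∑ q1, ∑ q2, B q2 q1 * (T c b q1 * T a d q2) := by
          refine Finset.sum_congr rfl fun q1 _ => Finset.sum_congr rfl fun q2 _ => ?_
          rw [hBsymm q2 q1]; ring
  -- final assembly
  rw [claim2 j l i k, claim2 i l j k]
  calc ∑ m1, ∑ p1, ∑ m2, ∑ p2, B j m1 * (B l p1 * (B i m2 * (B k p2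
          * (∑ q1, ∑ q2, B q2 q1 * (T m1 p1 q1 * T m2 p2 q2)))))
      = ∑ m1, ∑ p1, ∑ m2, ∑ p2, B i m2 * (B l p1 * (B j m1 * (B k p2
          * (∑ q1, ∑ q2, B q2 q1 * (T m2 p1 q1 * T m1 p2 q2))))) := by
        refine Finset.sum_congr rfl fun m1 _ => Finset.sum_congr rfl fun p1 _ =>
          Finset.sum_congr rfl fun m2 _ => Finset.sum_congr rfl fun p2 _ => ?_
        rw [hC m1 p1 m2 p2]; ring
    _ = ∑ m1, ∑ p1, ∑ m2, ∑ p2, B i m1 * (B l p1 * (B j m2 * (B k p2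
          * (∑ q1, ∑ q2, B q2 q1 * (T m1 p1 q1 * T m2 p2 q2))))) := by
        rw [swapd1, swapd2, swapd1]

/-- The Legendre dual of a solution of the WDVV equations again satisfies the
WDVV equations. -/
theorem wdvv_legendre_dual {n : ℕ} (Ω Ωs : Set (Fin n → ℝ))
    (hΩ : IsOpen Ω) (hΩs : IsOpen Ωs)
    (Φ : (Fin n → ℝ) → ℝ) (hΦ : ContDiffOn ℝ (⊤ : ℕ∞) Φ Ω)
    (hpos : ∀ x ∈ Ω, (hessian Φ x).PosDef)
    (hbij : Set.BijOn (gradMap Φ) Ω Ωs)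
    (Φs : (Fin n → ℝ) → ℝ) (hΦs : ContDiffOn ℝ (⊤ : ℕ∞) Φs Ωs)
    (hdual : ∀ x ∈ Ω, gradMap Φs (gradMap Φ x) = x)
    (hwdvv : ∀ x ∈ Ω, ∀ i j k l : Fin n,
      ∑ p : Fin n, ∑ q : Fin n,
        (hessian Φ x)⁻¹ p q * pd3 Φ j l p x * pd3 Φ i k q x =
      ∑ p : Fin n, ∑ q : Fin n,
        (hessian Φ x)⁻¹ p q * pd3 Φ i l p x * pd3 Φ j k q x) :
    ∀ u ∈ Ωs, ∀ i j k l : Fin n,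
      ∑ p : Fin n, ∑ q : Fin n,
        (hessian Φs u)⁻¹ p q * pd3 Φs j l p u * pd3 Φs i k q u =
      ∑ p : Fin n, ∑ q : Fin n,
        (hessian Φs u)⁻¹ p q * pd3 Φs i l p u * pd3 Φs j k q u := by
  intro u hu i j k l
  obtain ⟨x, hx, hxu⟩ := hbij.surjOn hu
  subst hxu
  have hu' : gradMap Φ x ∈ Ωs := hu
  have hABmat : hessian Φ x * hessian Φs (gradMap Φ x) = 1 := by
    ext a b
    rw [Matrix.mul_apply, Matrix.one_apply]
    have h := step1 hΩ hΩs hΦ hΦs hbij.mapsTo hdual hx b a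
    simp only [hessian, Matrix.of_apply]
    rw [h]
    by_cases hab : a = b
    · simp [hab]
    · simp [hab, Ne.symm hab]
  have hBAmat : hessian Φs (gradMap Φ x) * hessian Φ x = 1 :=
    mul_eq_one_comm.mp hABmat
  have hAinv : (hessian Φ x)⁻¹ = hessian Φs (gradMap Φ x) :=
    Matrix.inv_eq_right_inv hABmat
  have hBinv : (hessian Φs (gradMap Φ x))⁻¹ = hessian Φ x :=
    Matrix.inv_eq_right_inv hBAmat
  simp only [hBinv]
  refine algebra_main (hessian Φ x) (hessian Φs (gradMap Φ x))
    (fun a b c => pd3 Φ a b c x) (fun a b c => pd3 Φs a b c (gradMap Φ x))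
    ?_ ?_ ?_ ?_ i j k l
  · intro a b
    have h : (hessian Φs (gradMap Φ x) * hessian Φ x) a b
        = (1 : Matrix (Fin n) (Fin n) ℝ) a b := by rw [hBAmat]
    rw [Matrix.mul_apply, Matrix.one_apply] at h
    exact h
  · intro a b
    exact pd_comm hΩs hΦs hu' a b
  · intro c d m
    have h4 := step4 hΩ hΩs hΦ hΦs hbij.mapsTo hdual hx c d m
    rw [Finset.sum_add_distrib] at h4
    show ∑ k', pd d (pd k' Φ) x * (∑ r, pd m (pd r Φ) x * pd3 Φs r k' c (gradMap Φ x))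
        = -∑ q, pd3 Φ m d q x * pd q (pd c Φs) (gradMap Φ x)
    linarith [h4]
  · intro a b c d
    have h := hwdvv x hx a b c d
    rw [hAinv] at h
    exact h
end
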